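/- arXiv:1007.1890 — 7 statements merged into one kernel-verified Lean document; each statement's English description precedes it below -/
import Mathlib

section
/- Let K be a nontrivial finite p-group and μ the Möbius function of its subgroup lattice. Then (1/|Φ(K)|) · ∑_{1 ≤ H ≤ K} |H| · μ(H,K) equals p − 1 if K is cyclic, and equals 0 if K is not cyclic, where the sum runs over all subgroups H of K. -/
/-!
Möbius inversion over the subgroup lattice turns `∑_H |H| μ(H,K)` into the number of elements
`x` with `⟨x⟩ = K`: writing `|H| = ∑_x [x ∈ H]`, the inner sum `∑_{⟨x⟩ ≤ H} μ(H,K)` vanishes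
unless `⟨x⟩ = K`. So the sum is `0` when `K` is not cyclic. When `K = ⟨g⟩` has order `p^n`, an
element `g^k` generates `K` exactly when `p ∤ k`, so `⟨g^p⟩` is the unique maximal subgroup, hence
equals `Φ(K)`, and the generators are the `p^n - p^(n-1)` elements outside it.
-/

open Finset Subgroup

open Classical in
theorem mobius_sum_right_eq_ite {P R : Type*} [PartialOrder P] [Fintype P] [CommRing R]
    {μ : P → P → R}
    (hμ : ∀ A B : P, A ≤ B →
      (∑ L ∈ univ.filter fun L => A ≤ L ∧ L ≤ B, μ A L) = if A = B then 1 else 0)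
    (A B : P) :
    (∑ L ∈ univ.filter fun L => A ≤ L ∧ L ≤ B, μ L B) = if A = B then 1 else 0 := by
  let ζ : Matrix P P R := fun A B => if A ≤ B then 1 else 0
  let U : Matrix P P R := fun A B => if A ≤ B then μ A B else 0
  have hUζ : U * ζ = 1 := by
    ext A B
    have hentry : (U * ζ) A B = ∑ L ∈ univ.filter fun L => A ≤ L ∧ L ≤ B, μ A L := by
      rw [Matrix.mul_apply, sum_filter]
      refine sum_congr rfl fun L _ => ?_
      by_cases hAL : A ≤ L <;> by_cases hLB : L ≤ B <;> simp [U, ζ, hAL, hLB]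
    rw [hentry, Matrix.one_apply]
    by_cases hAB : A ≤ B
    · exact hμ A B hAB
    · rw [if_neg (fun h => hAB h.le), sum_eq_zero]
      exact fun L hL => absurd ((mem_filter.mp hL).2.elim le_trans) hAB
  -- a one-sided inverse of a square matrix over a commutative ring is two-sided
  have hζU := congrArg (fun M : Matrix P P R => M A B) (mul_eq_one_comm.mp hUζ)
  rw [Matrix.mul_apply, Matrix.one_apply] at hζU
  rw [← hζU, sum_filter]
  refine sum_congr rfl fun L _ => ?_
  by_cases hAL : A ≤ L <;> by_cases hLB : L ≤ B <;> simp [U, ζ, hAL, hLB]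

open Classical in
theorem sum_card_mul_mobius_top {K R : Type*} [Group K] [Fintype K] [Fintype (Subgroup K)]
    [CommRing R] {μ : Subgroup K → Subgroup K → R}
    (hμ : ∀ A B : Subgroup K, A ≤ B →
      (∑ L ∈ univ.filter fun L => A ≤ L ∧ L ≤ B, μ A L) = if A = B then 1 else 0) :
    ∑ H : Subgroup K, (Nat.card H : R) * μ H ⊤ = #{x : K | zpowers x = ⊤} := by
  have hcard (H : Subgroup K) : (Nat.card H : R) = ∑ x : K, if x ∈ H then 1 else 0 := by
    rw [sum_boole, Nat.card_eq_fintype_card, Fintype.card_subtype]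
  have hgen (x : K) : (∑ H : Subgroup K, (if x ∈ H then 1 else 0) * μ H ⊤) =
      if zpowers x = ⊤ then 1 else 0 := by
    rw [← mobius_sum_right_eq_ite hμ, sum_filter]
    refine sum_congr rfl fun H _ => ?_
    simp only [zpowers_le, le_top, and_true, boole_mul]
  simp_rw [hcard, sum_mul]
  rw [sum_comm]
  simp_rw [hgen, sum_boole]

namespace IsPGroup

variable {K : Type*} [Group K] {p : ℕ} [hp : Fact p.Prime] {g : K}

theorem mem_zpowers_pow_or_zpowers_eq_top [Finite K] (hK : IsPGroup p K) (hg : zpowers g = ⊤)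
    (x : K) : x ∈ zpowers (g ^ p) ∨ zpowers x = ⊤ := by
  obtain ⟨k, rfl⟩ : x ∈ Submonoid.powers g := mem_powers_iff_mem_zpowers.mpr (hg ▸ mem_top x)
  by_cases hpk : p ∣ k
  · obtain ⟨m, rfl⟩ := hpk
    exact Or.inl ⟨m, by simp [pow_mul]⟩
  · right
    obtain ⟨n, hn⟩ := (IsPGroup.iff_orderOf.mp hK) g
    have hcop : (orderOf g).Coprime k := hn ▸ (hp.out.coprime_iff_not_dvd.mpr hpk).pow_left n
    rw [← card_eq_iff_eq_top, Nat.card_zpowers, hcop.orderOf_pow, ← Nat.card_zpowers, hg, card_top]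

theorem le_zpowers_pow_of_ne_top [Finite K] (hK : IsPGroup p K) (hg : zpowers g = ⊤)
    {H : Subgroup K} (hH : H ≠ ⊤) : H ≤ zpowers (g ^ p) := by
  intro x hx
  refine (hK.mem_zpowers_pow_or_zpowers_eq_top hg x).resolve_right fun hx_gen => hH ?_
  rw [eq_top_iff, ← hx_gen, zpowers_le]
  exact hx

theorem card_zpowers_pow_mul [Finite K] [Nontrivial K] (hK : IsPGroup p K)
    (hg : zpowers g = ⊤) : Nat.card (zpowers (g ^ p)) * p = Nat.card K := by
  have hord : orderOf g = Nat.card K := orderOf_eq_card_of_zpowers_eq_top hg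
  have hdvd : p ∣ orderOf g := hord ▸ hK.card_eq_or_dvd.resolve_left Finite.one_lt_card.ne'
  rw [Nat.card_zpowers, orderOf_pow_of_dvd hp.out.ne_zero hdvd, Nat.div_mul_cancel hdvd, hord]

theorem zpowers_pow_ne_top [Finite K] [Nontrivial K] (hK : IsPGroup p K) (hg : zpowers g = ⊤) :
    zpowers (g ^ p) ≠ ⊤ := by
  intro htop
  have hcard := hK.card_zpowers_pow_mul hg
  rw [htop, card_top] at hcard
  have : 0 < Nat.card K := Nat.card_pos
  have := hp.out.one_lt
  nlinarith

theorem isCoatom_zpowers_pow [Finite K] [Nontrivial K] (hK : IsPGroup p K)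
    (hg : zpowers g = ⊤) : IsCoatom (zpowers (g ^ p)) :=
  ⟨hK.zpowers_pow_ne_top hg, fun _ hlt => by_contra fun hH =>
    (hlt.trans_le (hK.le_zpowers_pow_of_ne_top hg hH)).false⟩

theorem frattini_eq_zpowers_pow [Finite K] [Nontrivial K] (hK : IsPGroup p K)
    (hg : zpowers g = ⊤) : frattini K = zpowers (g ^ p) := by
  have hM := hK.isCoatom_zpowers_pow hg
  refine le_antisymm (frattini_le_coatom hM) (le_iInf₂ fun C hC => ?_)
  have hCM := hK.le_zpowers_pow_of_ne_top hg hC.1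
  exact ((hC.le_iff.mp hCM).resolve_left hM.1).le

open Classical in
theorem card_generators_add_card_zpowers_pow [Fintype K] [Nontrivial K] (hK : IsPGroup p K)
    (hg : zpowers g = ⊤) : #{x : K | zpowers x = ⊤} + Nat.card (zpowers (g ^ p)) = Nat.card K := by
  have hgen (x : K) : zpowers x = ⊤ ↔ x ∉ zpowers (g ^ p) := by
    refine ⟨fun hx hxM => hK.zpowers_pow_ne_top hg ?_, fun hx => ?_⟩
    · rw [eq_top_iff, ← hx, zpowers_le]
      exact hxM
    · exact (hK.mem_zpowers_pow_or_zpowers_eq_top hg x).resolve_left hx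
  rw [filter_congr fun x _ => hgen x, Nat.card_eq_fintype_card (α := zpowers _),
    Fintype.card_subtype, add_comm, card_filter_add_card_filter_not, card_univ,
    Nat.card_eq_fintype_card]

end IsPGroup

open Classical in
theorem stmt_5 {K : Type*} [Group K] [Fintype K] [Fintype (Subgroup K)] [Nontrivial K]
    (p : ℕ) (hp : p.Prime) (hK : IsPGroup p K)
    (μ : Subgroup K → Subgroup K → ℚ)
    (hμ : ∀ A B : Subgroup K, A ≤ B →
      (∑ L ∈ Finset.univ.filter fun L => A ≤ L ∧ L ≤ B, μ A L) = if A = B then 1 else 0) :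
    (1 / (Nat.card (frattini K) : ℚ)) * ∑ H : Subgroup K, (Nat.card H : ℚ) * μ H ⊤ =
      if IsCyclic K then (p : ℚ) - 1 else 0 := by
  have : Fact p.Prime := ⟨hp⟩
  rw [sum_card_mul_mobius_top hμ]
  split_ifs with hcyc
  · obtain ⟨g, hg⟩ := isCyclic_iff_exists_zpowers_eq_top.mp hcyc
    have hcount : (#{x : K | zpowers x = ⊤} : ℚ) + Nat.card (zpowers (g ^ p)) =
        Nat.card (zpowers (g ^ p)) * p := by
      exact_mod_cast (hK.card_generators_add_card_zpowers_pow hg).trans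
        (hK.card_zpowers_pow_mul hg).symm
    have hpos : (0 : ℚ) < Nat.card (zpowers (g ^ p)) := by exact_mod_cast Nat.card_pos
    rw [hK.frattini_eq_zpowers_pow hg, div_mul_eq_mul_div, one_mul, div_eq_iff hpos.ne']
    linarith
  · have hno_gen : ∀ x : K, zpowers x ≠ ⊤ := fun x hx =>
      hcyc (isCyclic_iff_exists_zpowers_eq_top.mpr ⟨x, hx⟩)
    simp [hno_gen]
end

section
/- Let G₁ and G₂ be finite groups and p a prime. Then ∑_{H ≤ G₁×G₂, H a p-subgroup} μ(H) = (∑_{H₁ ≤ G₁, H₁ a p-subgroup} μ(H₁)) · (∑_{H₂ ≤ G₂, H₂ a p-subgroup} μ(H₂)), where μ(H) = μ(1,H) is the Möbius function of the subgroup lattice and the sums include the trivial subgroup. Equivalently, 1 − χ(S*_{G₁×G₂}) = (1 − χ(S*_{G₁}))·(1 − χ(S*_{G₂})). -/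
/-!
Sending a subgroup `H ≤ G₁ × G₂` to its pair of projections is the lower adjoint of
`(K₁, K₂) ↦ K₁ × K₂`, and `K₁ × K₂ = 1` only for `K₁ = K₂ = 1`. A Galois connection whose upper
adjoint reflects `⊥` pushes `μ(⊥, ·)` forward: summing `μ(1, H)` over the subgroups `H` with
projections `(K₁, K₂)` gives the Möbius function of the product lattice, `μ₁(1, K₁) μ₂(1, K₂)`.
As `H` is a `p`-group exactly when both its projections are, the sum over `p`-subgroups of
`G₁ × G₂` is the sum of `μ₁(1, K₁) μ₂(1, K₂)` over pairs of `p`-subgroups, which factors.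
-/

open Finset Classical

section MoebiusBot

variable {α β R : Type*} [PartialOrder α] [PartialOrder β] [Fintype α] [Fintype β]

theorem Finset.eq_of_forall_sum_filter_le_eq [AddCancelCommMonoid R] {f g : α → R}
    (h : ∀ x, ∑ y ∈ univ.filter (· ≤ x), f y = ∑ y ∈ univ.filter (· ≤ x), g y) : f = g := by
  funext x
  induction x using WellFoundedLT.induction with
  | _ x ih =>
    have hx : x ∈ univ.filter (· ≤ x) := by simp
    have hlt : ∑ y ∈ (univ.filter (· ≤ x)).erase x, f y
        = ∑ y ∈ (univ.filter (· ≤ x)).erase x, g y :=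
      sum_congr rfl fun y hy => by
        simp only [mem_erase, mem_filter, mem_univ, true_and] at hy
        exact ih y (lt_of_le_of_ne hy.2 hy.1)
    have := h x
    rw [← add_sum_erase _ _ hx, ← add_sum_erase _ _ hx, hlt] at this
    exact add_right_cancel this

/-- `f` is the Möbius function `μ(⊥, ·)` of `α`. -/
def IsMoebiusBot [OrderBot α] [AddCommMonoidWithOne R] (f : α → R) : Prop :=
  ∀ x, ∑ y ∈ univ.filter (· ≤ x), f y = if x = ⊥ then 1 else 0

theorem isMoebiusBot_of_sum_Icc [OrderBot α] [AddCommMonoidWithOne R] {μ : α → α → R}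
    (hμ : ∀ A B, A ≤ B →
      ∑ L ∈ univ.filter (fun L => A ≤ L ∧ L ≤ B), μ A L = if A = B then 1 else 0) :
    IsMoebiusBot (μ ⊥) := fun x => by
  simpa [eq_comm] using hμ ⊥ x bot_le

theorem IsMoebiusBot.prod [OrderBot α] [OrderBot β] [Semiring R] {f : α → R} {g : β → R}
    (hf : IsMoebiusBot f) (hg : IsMoebiusBot g) :
    IsMoebiusBot fun x : α × β => f x.1 * g x.2 := fun x =>
  calc _ = ∑ y ∈ univ.filter (· ≤ x.1) ×ˢ univ.filter (· ≤ x.2), f y.1 * g y.2 :=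
        sum_congr (by ext; simp [Prod.le_def]) fun _ _ => rfl
    _ = (∑ y ∈ univ.filter (· ≤ x.1), f y) * ∑ y ∈ univ.filter (· ≤ x.2), g y := by
        rw [sum_product, sum_mul_sum]
    _ = _ := by
        rw [hf, hg]
        split_ifs <;> simp_all [Prod.ext_iff]

theorem IsMoebiusBot.sum_fiber_eq [OrderBot α] [OrderBot β] [AddCommGroupWithOne R]
    {l : α → β} {u : β → α} (gc : GaloisConnection l u) (hu : ∀ b, u b = ⊥ ↔ b = ⊥)
    {f : α → R} {g : β → R} (hf : IsMoebiusBot f) (hg : IsMoebiusBot g) (b : β) :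
    ∑ a ∈ univ.filter (fun a => l a = b), f a = g b := by
  suffices (fun b => ∑ a ∈ univ.filter (fun a => l a = b), f a) = g from congrFun this b
  refine eq_of_forall_sum_filter_le_eq fun b => ?_
  calc ∑ b' ∈ univ.filter (· ≤ b), ∑ a ∈ univ.filter (fun a => l a = b'), f a
      = ∑ a ∈ univ.filter (· ≤ u b), f a := by
        convert sum_fiberwise_eq_sum_filter univ (univ.filter (· ≤ b)) l f using 2
        ext; simp [gc.le_iff_le]
    _ = ∑ b' ∈ univ.filter (· ≤ b), g b' := by rw [hf, hg, if_congr (hu b) rfl rfl]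

theorem IsMoebiusBot.sum_filter_mem_eq [OrderBot α] [OrderBot β] [AddCommGroupWithOne R]
    {l : α → β} {u : β → α} (gc : GaloisConnection l u) (hu : ∀ b, u b = ⊥ ↔ b = ⊥)
    {f : α → R} {g : β → R} (hf : IsMoebiusBot f) (hg : IsMoebiusBot g) (t : Finset β) :
    ∑ a ∈ univ.filter (fun a => l a ∈ t), f a = ∑ b ∈ t, g b := by
  rw [← sum_congr rfl fun b _ => hf.sum_fiber_eq gc hu hg b]
  convert (sum_fiberwise_eq_sum_filter univ t l f).symm

end MoebiusBot

theorem IsPGroup.prod {p : ℕ} {G K : Type*} [Group G] [Group K]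
    (hG : IsPGroup p G) (hK : IsPGroup p K) : IsPGroup p (G × K) := fun g => by
  obtain ⟨n, hn⟩ := hG g.1
  obtain ⟨m, hm⟩ := hK g.2
  refine ⟨n + m, Prod.ext ?_ ?_⟩
  · rw [Prod.pow_fst, pow_add, pow_mul, hn, one_pow, Prod.fst_one]
  · rw [Prod.pow_snd, pow_add, mul_comm, pow_mul, hm, one_pow, Prod.snd_one]

namespace Subgroup

variable {G N : Type*} [Group G] [Group N]

theorem gc_map_fst_snd_prod :
    GaloisConnection
      (fun H : Subgroup (G × N) => (H.map (MonoidHom.fst G N), H.map (MonoidHom.snd G N)))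
      (fun K => K.1.prod K.2) :=
  fun _ _ => le_prod_iff.symm

theorem isPGroup_iff_map_fst_snd {p : ℕ} {H : Subgroup (G × N)} :
    IsPGroup p H ↔
      IsPGroup p (H.map (MonoidHom.fst G N)) ∧ IsPGroup p (H.map (MonoidHom.snd G N)) := by
  refine ⟨fun h => ⟨h.map _, h.map _⟩, fun ⟨h₁, h₂⟩ => ?_⟩
  exact ((h₁.prod h₂).of_equiv (prodEquiv _ _).symm).to_le (le_prod_iff.2 ⟨le_rfl, le_rfl⟩)

end Subgroup

open Classical in
theorem stmt_12_general {G₁ G₂ : Type*} [Group G₁] [Group G₂]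
    [Fintype (Subgroup (G₁ × G₂))] [Fintype (Subgroup G₁)] [Fintype (Subgroup G₂)]
    (p : ℕ)
    (μ : Subgroup (G₁ × G₂) → Subgroup (G₁ × G₂) → ℚ)
    (hμ : ∀ A B : Subgroup (G₁ × G₂), A ≤ B →
      (∑ L ∈ Finset.univ.filter fun L => A ≤ L ∧ L ≤ B, μ A L) = if A = B then 1 else 0)
    (μ₁ : Subgroup G₁ → Subgroup G₁ → ℚ)
    (hμ₁ : ∀ A B : Subgroup G₁, A ≤ B →
      (∑ L ∈ Finset.univ.filter fun L => A ≤ L ∧ L ≤ B, μ₁ A L) = if A = B then 1 else 0)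
    (μ₂ : Subgroup G₂ → Subgroup G₂ → ℚ)
    (hμ₂ : ∀ A B : Subgroup G₂, A ≤ B →
      (∑ L ∈ Finset.univ.filter fun L => A ≤ L ∧ L ≤ B, μ₂ A L) = if A = B then 1 else 0) :
    (∑ H ∈ Finset.univ.filter fun H : Subgroup (G₁ × G₂) => IsPGroup p H, μ ⊥ H)
      = (∑ H₁ ∈ Finset.univ.filter fun H₁ : Subgroup G₁ => IsPGroup p H₁, μ₁ ⊥ H₁) *
        (∑ H₂ ∈ Finset.univ.filter fun H₂ : Subgroup G₂ => IsPGroup p H₂, μ₂ ⊥ H₂) := by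
  have hpush := (isMoebiusBot_of_sum_Icc hμ).sum_filter_mem_eq Subgroup.gc_map_fst_snd_prod
    (fun _ => Subgroup.prod_eq_bot_iff.trans (Prod.ext_iff (y := ⊥)).symm)
    ((isMoebiusBot_of_sum_Icc hμ₁).prod (isMoebiusBot_of_sum_Icc hμ₂))
    (univ.filter (fun H₁ : Subgroup G₁ => IsPGroup p H₁) ×ˢ
      univ.filter (fun H₂ : Subgroup G₂ => IsPGroup p H₂))
  simp only [mem_product, mem_filter, mem_univ, true_and,
    ← Subgroup.isPGroup_iff_map_fst_snd] at hpush
  rw [hpush, sum_product, sum_mul_sum]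

open Classical in
theorem stmt_12 {G₁ G₂ : Type*} [Group G₁] [Group G₂] [Fintype G₁] [Fintype G₂]
    [Fintype (Subgroup (G₁ × G₂))] [Fintype (Subgroup G₁)] [Fintype (Subgroup G₂)]
    (p : ℕ) (hp : p.Prime)
    (μ : Subgroup (G₁ × G₂) → Subgroup (G₁ × G₂) → ℚ)
    (hμ : ∀ A B : Subgroup (G₁ × G₂), A ≤ B →
      (∑ L ∈ Finset.univ.filter fun L => A ≤ L ∧ L ≤ B, μ A L) = if A = B then 1 else 0)
    (μ₁ : Subgroup G₁ → Subgroup G₁ → ℚ)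
    (hμ₁ : ∀ A B : Subgroup G₁, A ≤ B →
      (∑ L ∈ Finset.univ.filter fun L => A ≤ L ∧ L ≤ B, μ₁ A L) = if A = B then 1 else 0)
    (μ₂ : Subgroup G₂ → Subgroup G₂ → ℚ)
    (hμ₂ : ∀ A B : Subgroup G₂, A ≤ B →
      (∑ L ∈ Finset.univ.filter fun L => A ≤ L ∧ L ≤ B, μ₂ A L) = if A = B then 1 else 0) :
    (∑ H ∈ Finset.univ.filter fun H : Subgroup (G₁ × G₂) => IsPGroup p H, μ ⊥ H)
      = (∑ H₁ ∈ Finset.univ.filter fun H₁ : Subgroup G₁ => IsPGroup p H₁, μ₁ ⊥ H₁) *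
        (∑ H₂ ∈ Finset.univ.filter fun H₂ : Subgroup G₂ => IsPGroup p H₂, μ₂ ⊥ H₂) :=
  stmt_12_general p μ hμ μ₁ hμ₁ μ₂ hμ₂
end

section
/- Let G be a finite group with a normal Sylow p-subgroup P, let H be a nontrivial subgroup of P, and let μ be the Möbius function of the subgroup lattice of G. Then ∑_{K : H ≤ K ≤ P} μ(H,K)·|C_G(K)| = |{x ∈ G : C_P(x) = H}|. -/
/-!
An element `x` centralizes `K` exactly when `K ≤ C_G(x)`, so `|C_G(K)| = #{x | K ≤ C_G(x)}`.
Exchanging the two sums, the left-hand side becomes `∑ₓ ∑_{H ≤ K ≤ P ⊓ C_G(x)} μ(H, K)`, and by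
the defining recursion of the Möbius function the inner sum is `1` if `P ⊓ C_G(x) = H` and `0`
otherwise.
-/

open Finset

section Mobius

variable {α : Type*} [Fintype α] {R : Type*} [NonAssocSemiring R]

open Classical in
def IsMobiusFunction [Preorder α] (μ : α → α → R) : Prop :=
  ∀ a b : α, a ≤ b → (∑ c ∈ {c | a ≤ c ∧ c ≤ b}, μ a c) = if a = b then 1 else 0

namespace IsMobiusFunction

open Classical in
theorem sum_filter_le_le [PartialOrder α] {μ : α → α → R} (hμ : IsMobiusFunction μ)
    (a b : α) :
    (∑ c ∈ {c | a ≤ c ∧ c ≤ b}, μ a c) = if a = b then 1 else 0 := by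
  by_cases hab : a ≤ b
  · exact hμ a b hab
  · rw [if_neg (fun h => hab h.le), Finset.sum_eq_zero]
    intro c hc
    exact absurd ((mem_filter.mp hc).2.1.trans (mem_filter.mp hc).2.2) hab

open Classical in
theorem sum_mul_card_le_eq_card_inf_eq [SemilatticeInf α] {μ : α → α → R}
    (hμ : IsMobiusFunction μ) {X : Type*} [Fintype X] (f : X → α) (a u : α) :
    (∑ b ∈ {b | a ≤ b ∧ b ≤ u}, μ a b * (#{x | b ≤ f x} : R))
      = #{x | u ⊓ f x = a} := by
  have hinner (x : X) : (∑ b ∈ {b | a ≤ b ∧ b ≤ u}, if b ≤ f x then μ a b else 0)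
      = if u ⊓ f x = a then 1 else 0 := by
    rw [← Finset.sum_filter, Finset.filter_filter, eq_comm (a := u ⊓ f x),
      ← hμ.sum_filter_le_le a (u ⊓ f x)]
    simp only [le_inf_iff, and_assoc]
  calc (∑ b ∈ {b | a ≤ b ∧ b ≤ u}, μ a b * (#{x | b ≤ f x} : R))
      = ∑ x, ∑ b ∈ {b | a ≤ b ∧ b ≤ u}, if b ≤ f x then μ a b else 0 := by
        rw [Finset.sum_comm]
        simp only [Finset.natCast_card_filter, Finset.mul_sum, mul_ite, mul_one, mul_zero]
    _ = #{x | u ⊓ f x = a} := by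
        simp only [hinner, Finset.natCast_card_filter]

end IsMobiusFunction

end Mobius

namespace Subgroup

variable {G : Type*} [Group G]

theorem le_centralizer_singleton_iff {K : Subgroup G} {x : G} :
    K ≤ centralizer {x} ↔ x ∈ centralizer (K : Set G) := by
  simp only [SetLike.le_def, mem_centralizer_iff, SetLike.mem_coe, Set.mem_singleton_iff,
    forall_eq]
  exact forall₂_congr fun _ _ => eq_comm

open Classical in
theorem card_centralizer_eq_card_filter [Fintype G] (K : Subgroup G) :
    Nat.card (centralizer (K : Set G)) = #{x | K ≤ centralizer {x}} := by
  simp only [le_centralizer_singleton_iff]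
  rw [← Nat.card_eq_finsetCard]
  simp

end Subgroup

open Classical in
theorem stmt_14_general {G : Type*} [Group G] [Fintype G] [Fintype (Subgroup G)]
    (p : ℕ)
    (P : Sylow p G)
    (H : Subgroup G)
    (μ : Subgroup G → Subgroup G → ℚ)
    (hμ : ∀ A B : Subgroup G, A ≤ B →
      (∑ L ∈ Finset.univ.filter fun L => A ≤ L ∧ L ≤ B, μ A L) = if A = B then 1 else 0) :
    (∑ K ∈ Finset.univ.filter fun K : Subgroup G => H ≤ K ∧ K ≤ P,
        μ H K * (Nat.card (Subgroup.centralizer (K : Set G)) : ℚ))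
      = ((Finset.univ.filter fun x : G =>
          (P : Subgroup G) ⊓ Subgroup.centralizer {x} = H).card : ℚ) := by
  rw [← IsMobiusFunction.sum_mul_card_le_eq_card_inf_eq hμ fun x => Subgroup.centralizer {x}]
  simp only [Subgroup.card_centralizer_eq_card_filter]

open Classical in
theorem stmt_14 {G : Type*} [Group G] [Fintype G] [Fintype (Subgroup G)]
    (p : ℕ) (hp : p.Prime)
    (P : Sylow p G) (hP : (P : Subgroup G).Normal)
    (H : Subgroup G) (hH : H ≠ ⊥) (hHP : H ≤ P)
    (μ : Subgroup G → Subgroup G → ℚ)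
    (hμ : ∀ A B : Subgroup G, A ≤ B →
      (∑ L ∈ Finset.univ.filter fun L => A ≤ L ∧ L ≤ B, μ A L) = if A = B then 1 else 0) :
    (∑ K ∈ Finset.univ.filter fun K : Subgroup G => H ≤ K ∧ K ≤ P,
        μ H K * (Nat.card (Subgroup.centralizer (K : Set G)) : ℚ))
      = ((Finset.univ.filter fun x : G =>
          (P : Subgroup G) ⊓ Subgroup.centralizer {x} = H).card : ℚ) :=
  stmt_14_general p P H μ hμ
end

section
/- Let G be a finite group, p a prime, and H, K nontrivial p-subgroups of G. If there exist x ∈ G with H^x ≤ K and y ∈ G with K^y ≤ H such that conjugation by xy restricted to H is an inner automorphism of H and conjugation by yx restricted to K is an inner automorphism of K, then H and K are isomorphic in the Frobenius category: there exist x' ∈ G with H^{x'} = K such that conjugation by x' is an isomorphism H → K induced by G-conjugation. -/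
/-! Conjugation by `x` embeds `H` into `K` and conjugation by `y` embeds `K` into `H`, so the
finite groups `H` and `K` have the same order and the first embedding is onto: `H^x = K`. -/

namespace Subgroup

variable {G G' : Type*} [Group G] [Group G']

theorem map_eq_of_map_le_of_map_le {H : Subgroup G} {K : Subgroup G'} [Finite K]
    {f : G →* G'} {g : G' →* G} (hf : Function.Injective f) (hg : Function.Injective g)
    (hfHK : H.map f ≤ K) (hgKH : K.map g ≤ H) : H.map f = K := by
  have : Finite H := Finite.of_injective _
    ((inclusion_injective hfHK).comp (H.equivMapOfInjective f hf).injective)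
  refine eq_of_le_of_card_ge hfHK ?_
  calc Nat.card K = Nat.card (K.map g) := (card_map_of_injective hg).symm
    _ ≤ Nat.card H := card_le_of_le hgKH
    _ = Nat.card (H.map f) := (card_map_of_injective hf).symm

theorem map_conj_inv_le_iff {H K : Subgroup G} {x : G} :
    H.map (MulAut.conj x⁻¹).toMonoidHom ≤ K ↔ ∀ a ∈ H, x⁻¹ * a * x ∈ K := by
  simp [SetLike.le_def]

end Subgroup

theorem stmt_15_general {G : Type*} [Group G] [Fintype G]
    (H K : Subgroup G)
    (x y : G)
    (hx : ∀ a ∈ H, x⁻¹ * a * x ∈ K)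
    (hy : ∀ a ∈ K, y⁻¹ * a * y ∈ H) :
    ∃ x' : G, H.map (MulAut.conj x'⁻¹).toMonoidHom = K :=
  ⟨x, Subgroup.map_eq_of_map_le_of_map_le (MulAut.conj x⁻¹).injective
    (MulAut.conj y⁻¹).injective (Subgroup.map_conj_inv_le_iff.2 hx)
    (Subgroup.map_conj_inv_le_iff.2 hy)⟩

theorem stmt_15 {G : Type*} [Group G] [Fintype G] (p : ℕ) (hp : p.Prime)
    (H K : Subgroup G) (hH : H ≠ ⊥) (hK : K ≠ ⊥)
    (hHp : IsPGroup p H) (hKp : IsPGroup p K)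
    (x y : G)
    (hx : ∀ a ∈ H, x⁻¹ * a * x ∈ K)
    (hy : ∀ a ∈ K, y⁻¹ * a * y ∈ H)
    (hxy : ∃ h ∈ H, ∀ a ∈ H, (x * y)⁻¹ * a * (x * y) = h⁻¹ * a * h)
    (hyx : ∃ k ∈ K, ∀ a ∈ K, (y * x)⁻¹ * a * (y * x) = k⁻¹ * a * k) :
    ∃ x' : G, H.map (MulAut.conj x'⁻¹).toMonoidHom = K :=
  stmt_15_general H K x y hx hy
end

section
/- Let G be a finite group with Sylow p-subgroup P and let H be a p-subgroup of G. Then H is p-selfcentralizing (i.e., Z(H) = C_H(H) is a Sylow p-subgroup of C_G(H)) if and only if for every g ∈ G with H^g ≤ P one has C_P(H^g) ≤ H^g. -/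
/-- The conjugate subgroup `H^g = g⁻¹ H g`. -/
def conjSub {G : Type*} [Group G] (g : G) (H : Subgroup G) : Subgroup G :=
  H.map (MulAut.conj g⁻¹).toMonoidHom

/-- A `p`-subgroup `H ≤ G` is `p`-selfcentralizing if `Z(H) = C_H(H)` is a Sylow
`p`-subgroup of `C_G(H)`: i.e. it is a `p`-group of index prime to `p` in `C_G(H)`. -/
def IsPSelfCentralizing (p : ℕ) {G : Type*} [Group G] (H : Subgroup G) : Prop :=
  IsPGroup p ↥(H ⊓ Subgroup.centralizer (H : Set G)) ∧
  ¬ p ∣ (H ⊓ Subgroup.centralizer (H : Set G)).relIndex (Subgroup.centralizer (H : Set G))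

/-!
`H` is `p`-selfcentralizing exactly when every `p`-subgroup of `C_G(H)` lies in `H`: a
`p`-subgroup `S ≤ C_G(H)` generates with `Z(H)` a `p`-group, which cannot properly contain a
subgroup of `p'`-index in `C_G(H)`. This property is invariant under conjugation, so it may be
tested on a conjugate `H^g ≤ P`; conversely, given `S`, conjugate the `p`-group `S H` into `P`.
-/

open Subgroup

section

variable {G G' : Type*} [Group G] [Group G'] {p : ℕ}

theorem Subgroup.centralizer_map_mulEquiv (e : G ≃* G') (H : Subgroup G) :
    centralizer ((H.map e.toMonoidHom : Subgroup G') : Set G') =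
      (centralizer (H : Set G)).map e.toMonoidHom := by
  ext x
  rw [mem_map_equiv, mem_centralizer_iff, mem_centralizer_iff]
  constructor
  · intro hx h hh
    simpa using congrArg e.symm (hx (e h) (mem_map_of_mem _ hh))
  · rintro hx _ ⟨h, hh, rfl⟩
    simpa using congrArg e (hx h hh)

theorem IsPGroup.sup_of_le_centralizer {S K : Subgroup G} (hS : IsPGroup p S) (hK : IsPGroup p K)
    (hSK : S ≤ centralizer (K : Set G)) : IsPGroup p ↥(S ⊔ K) :=
  hS.to_sup_of_normal_right' hK (hSK.trans (centralizer_le_normalizer _))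

theorem IsPGroup.le_of_not_dvd_relIndex [Fact p.Prime] {Z K C : Subgroup G} (hK : IsPGroup p K)
    (hZK : Z ≤ K) (hKC : K ≤ C) (hZC : ¬ p ∣ Z.relIndex C) : K ≤ Z := by
  have hdvd : Z.relIndex K ∣ Z.relIndex C := Dvd.intro _ (relIndex_mul_relIndex Z K C hZK hKC)
  have hne : Z.relIndex C ≠ 0 := fun h ↦ hZC (h ▸ dvd_zero p)
  have : (Z.subgroupOf K).FiniteIndex :=
    ⟨fun h ↦ hne (Nat.eq_zero_of_zero_dvd (by rwa [relIndex, h] at hdvd))⟩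
  obtain ⟨n, hn⟩ := hK.index (Z.subgroupOf K)
  have hcop : Nat.Coprime (Z.relIndex K) (Z.relIndex C) := by
    rw [relIndex, hn]
    exact ((Nat.Prime.coprime_iff_not_dvd Fact.out).mpr hZC).pow_left n
  exact relIndex_eq_one.mp (hcop.eq_one_of_dvd hdvd)

theorem IsPSelfCentralizing.le_of_isPGroup [Fact p.Prime] {H S : Subgroup G}
    (hH : IsPSelfCentralizing p H) (hS : IsPGroup p S) (hSC : S ≤ centralizer (H : Set G)) :
    S ≤ H := by
  obtain ⟨hZ, hZC⟩ := hH
  have hSZ : S ≤ centralizer ((H ⊓ centralizer (H : Set G) : Subgroup G) : Set G) :=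
    hSC.trans (centralizer_le (SetLike.coe_subset_coe.mpr inf_le_left))
  have hle := (hS.sup_of_le_centralizer hZ hSZ).le_of_not_dvd_relIndex le_sup_right
    (sup_le hSC inf_le_right) hZC
  exact le_sup_left.trans (hle.trans inf_le_left)

theorem isPSelfCentralizing_of_forall_le [Finite G] [Fact p.Prime] {H : Subgroup G}
    (hH : IsPGroup p H)
    (h : ∀ S : Subgroup G, IsPGroup p S → S ≤ centralizer (H : Set G) → S ≤ H) :
    IsPSelfCentralizing p H := by
  set C := centralizer (H : Set G)
  have hZ : IsPGroup p ↥(H ⊓ C) := hH.to_inf_left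
  refine ⟨hZ, ?_⟩
  obtain ⟨S⟩ : Nonempty (Sylow p C) := inferInstance
  have hSH : (S : Subgroup C).map C.subtype ≤ H :=
    h _ (S.isPGroup'.map _) (map_subtype_le _)
  have hSZ : (S : Subgroup C) ≤ (H ⊓ C).subgroupOf C := by
    rw [subgroupOf, ← map_le_iff_le_comap]
    exact le_inf hSH (map_subtype_le _)
  have hZS : (H ⊓ C).subgroupOf C = S := S.is_maximal' hZ.comap_subtype hSZ
  change ¬ p ∣ ((H ⊓ C).subgroupOf C).index
  rw [hZS]
  exact S.not_dvd_index

theorem IsPSelfCentralizing.map_mulEquiv (e : G ≃* G') {H : Subgroup G}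
    (hH : IsPSelfCentralizing p H) : IsPSelfCentralizing p (H.map e.toMonoidHom) := by
  obtain ⟨hZ, hZC⟩ := hH
  have hmap : H.map e.toMonoidHom ⊓ centralizer ((H.map e.toMonoidHom : Subgroup G') : Set G') =
      (H ⊓ centralizer (H : Set G)).map e.toMonoidHom := by
    rw [centralizer_map_mulEquiv, map_inf _ _ _ e.injective]
  refine ⟨hmap ▸ hZ.map _, ?_⟩
  rwa [hmap, centralizer_map_mulEquiv, relIndex_map_map_of_injective _ _ e.injective]

end

theorem stmt_16 {G : Type*} [Group G] [Fintype G] (p : ℕ) (hp : p.Prime)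
    (P : Sylow p G) (H : Subgroup G) (hH : IsPGroup p H) :
    IsPSelfCentralizing p H ↔
      ∀ g : G, conjSub g H ≤ P →
        (P : Subgroup G) ⊓ Subgroup.centralizer ((conjSub g H : Subgroup G) : Set G) ≤
          conjSub g H := by
  have : Fact p.Prime := ⟨hp⟩
  refine ⟨fun hSC g _ ↦
    (hSC.map_mulEquiv _).le_of_isPGroup P.isPGroup'.to_inf_left inf_le_right, fun h ↦ ?_⟩
  refine isPSelfCentralizing_of_forall_le hH fun S hS hSC ↦ ?_
  obtain ⟨Q, hQ⟩ := (hS.sup_of_le_centralizer hH hSC).exists_le_sylow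
  obtain ⟨g, rfl⟩ := MulAction.exists_smul_eq G Q P
  set e := MulAut.conj g
  have hconj : conjSub g⁻¹ H = H.map e.toMonoidHom := by rw [conjSub, inv_inv]
  have hHP : conjSub g⁻¹ H ≤ (g • Q : Sylow p G) := hconj ▸ map_mono (le_sup_right.trans hQ)
  have hSP : S.map e.toMonoidHom ≤ (g • Q : Sylow p G) := map_mono (le_sup_left.trans hQ)
  have hSC' : S.map e.toMonoidHom ≤
      centralizer ((conjSub g⁻¹ H : Subgroup G) : Set G) := by
    rw [hconj, centralizer_map_mulEquiv]
    exact map_mono hSC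
  have hle : S.map e.toMonoidHom ≤ H.map e.toMonoidHom :=
    hconj ▸ (le_inf hSP hSC').trans (h _ hHP)
  exact (map_le_map_iff_of_injective e.injective).mp hle
end

section
/- Let G be a finite group, H a p-selfcentralizing p-subgroup of G, and K a p-subgroup of G with H^g ≤ K for some g ∈ G. Then K is p-selfcentralizing, Z(H^g) = C_K(H^g), and Z(K) ≤ Z(H^g). -/
open Subgroup

section

variable {p : ℕ} {G G' : Type*} [Group G] [Group G']

theorem Subgroup.map_equiv_centralizer (e : G ≃* G') (s : Set G) :
    (centralizer s).map e.toMonoidHom = centralizer (e '' s) := by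
  refine le_antisymm (map_centralizer_le_centralizer_image s _) ?_
  rw [map_equiv_eq_comap_symm', ← map_le_iff_le_comap]
  refine (map_centralizer_le_centralizer_image _ _).trans_eq ?_
  rw [MulEquiv.coe_toMonoidHom, Set.image_image]
  simp only [MulEquiv.symm_apply_apply, Set.image_id']

theorem IsPSelfCentralizing.map {H : Subgroup G} (hH : IsPSelfCentralizing p H) (e : G ≃* G') :
    IsPSelfCentralizing p (H.map e.toMonoidHom) := by
  have hC : centralizer ((H.map e.toMonoidHom : Subgroup G') : Set G') =
      (centralizer (H : Set G)).map e.toMonoidHom := by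
    rw [map_equiv_centralizer, coe_map]; rfl
  rw [IsPSelfCentralizing, hC, ← map_inf _ _ _ e.injective,
    relIndex_map_map_of_injective _ _ e.injective]
  exact ⟨hH.1.map _, hH.2⟩

theorem IsPSelfCentralizing.conjSub {H : Subgroup G} (hH : IsPSelfCentralizing p H) (g : G) :
    IsPSelfCentralizing p (conjSub g H) :=
  hH.map _

theorem IsPGroup.le_of_normal_of_not_dvd_index [Fact p.Prime] {N P : Subgroup G} [N.Normal]
    (hN : IsPGroup p N) (hNp : ¬ p ∣ N.index) (hP : IsPGroup p P) : P ≤ N :=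
  le_sup_left.trans ((hN.toSylow hNp).is_maximal' (hP.to_sup_of_normal_right hN) le_sup_right).le

theorem IsPSelfCentralizing.le_inf_centralizer [Fact p.Prime] {H P : Subgroup G}
    (hH : IsPSelfCentralizing p H) (hP : IsPGroup p P) (hPC : P ≤ centralizer (H : Set G)) :
    P ≤ H ⊓ centralizer (H : Set G) := by
  set C := centralizer (H : Set G)
  set Z := H ⊓ C
  have : (Z.subgroupOf C).Normal := normal_subgroupOf_of_le_normalizer <|
    (centralizer_le inf_le_left).trans (centralizer_le_normalizer _)
  have hle : P.subgroupOf C ≤ Z.subgroupOf C :=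
    IsPGroup.le_of_normal_of_not_dvd_index (N := Z.subgroupOf C) hH.1.comap_subtype hH.2
      hP.comap_subtype
  calc P = (P.subgroupOf C).map C.subtype := (map_subgroupOf_eq_of_le hPC).symm
    _ ≤ (Z.subgroupOf C).map C.subtype := map_mono hle
    _ ≤ Z := map_subgroupOf_eq_of_le inf_le_right |>.le

theorem not_dvd_relIndex_of_forall_isPGroup_le [Finite G] [Fact p.Prime] {Z C : Subgroup G}
    (h : ∀ P ≤ C, IsPGroup p P → P ≤ Z) : ¬ p ∣ Z.relIndex C := by
  obtain ⟨R⟩ : Nonempty (Sylow p C) := inferInstance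
  have hRZ : R.map C.subtype ≤ Z := h _ (map_subtype_le _) (R.isPGroup'.map _)
  have hR : (R.map C.subtype).relIndex C = R.index := by
    rw [relIndex, subgroupOf, comap_map_eq_self_of_injective C.subtype_injective]
  exact fun hZ => R.not_dvd_index (hR ▸ hZ.trans (relIndex_dvd_of_le_left C hRZ))

end

theorem stmt_17_general {G : Type*} [Group G] [Fintype G] (p : ℕ) (hp : p.Prime)
    (H K : Subgroup G) (hK : IsPGroup p K)
    (hsc : IsPSelfCentralizing p H) (g : G) (hg : conjSub g H ≤ K) :
    IsPSelfCentralizing p K ∧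
    (conjSub g H ⊓ Subgroup.centralizer ((conjSub g H : Subgroup G) : Set G)
      = K ⊓ Subgroup.centralizer ((conjSub g H : Subgroup G) : Set G)) ∧
    (K ⊓ Subgroup.centralizer (K : Set G) ≤
      conjSub g H ⊓ Subgroup.centralizer ((conjSub g H : Subgroup G) : Set G)) := by
  have : Fact p.Prime := ⟨hp⟩
  have hH' := hsc.conjSub g
  have hCK : centralizer (K : Set G) ≤ centralizer (conjSub g H : Set G) := centralizer_le hg
  have hKC := hH'.le_inf_centralizer hK.to_inf_left inf_le_right
  have hZK : ∀ P ≤ centralizer (K : Set G), IsPGroup p P → P ≤ K ⊓ centralizer (K : Set G) :=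
    fun P hPC hP =>
      le_inf ((hH'.le_inf_centralizer hP (hPC.trans hCK)).trans (inf_le_left.trans hg)) hPC
  exact ⟨⟨hK.to_inf_left, not_dvd_relIndex_of_forall_isPGroup_le hZK⟩,
    le_antisymm (inf_le_inf_right _ hg) hKC, (inf_le_inf_left K hCK).trans hKC⟩

theorem stmt_17 {G : Type*} [Group G] [Fintype G] (p : ℕ) (hp : p.Prime)
    (H K : Subgroup G) (hH : IsPGroup p H) (hK : IsPGroup p K)
    (hsc : IsPSelfCentralizing p H) (g : G) (hg : conjSub g H ≤ K) :
    IsPSelfCentralizing p K ∧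
    (conjSub g H ⊓ Subgroup.centralizer ((conjSub g H : Subgroup G) : Set G)
      = K ⊓ Subgroup.centralizer ((conjSub g H : Subgroup G) : Set G)) ∧
    (K ⊓ Subgroup.centralizer (K : Set G) ≤
      conjSub g H ⊓ Subgroup.centralizer ((conjSub g H : Subgroup G) : Set G)) :=
  stmt_17_general p hp H K hK hsc g hg
end

section
/- Let G be a finite group with Sylow p-subgroup P and let Q ≤ P be a subgroup such that C_P(Q) is a Sylow p-subgroup of C_G(Q). Then the subgroup Q·C_P(Q) is p-selfcentralizing. -/
/-!
Write `R = P ∩ C_G(Q)` and `H = Q·R ≤ P`. Then `C_G(H) ≤ C_G(Q)`, so `Z(H) = H ∩ C_G(H)` equals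
`R ∩ C_G(H)`, a `p`-group. Since `C_G(H)` centralizes, hence normalizes, `R`, the product
`R·C_G(H)` is a subgroup between `R` and `C_G(Q)`, so `|C_G(H) : R ∩ C_G(H)| = |R·C_G(H) : R|`
divides `|C_G(Q) : R|`, which is prime to `p`.
-/

namespace Subgroup

variable {G : Type*} [Group G] {H K L : Subgroup G}

theorem relIndex_sup_right_of_le_normalizer (hH : H ≤ normalizer (K : Set G)) :
    K.relIndex (H ⊔ K) = K.relIndex H := by
  have hK : K ≤ normalizer (K : Set G) := le_normalizer
  rw [← relIndex_subgroupOf hH, ← relIndex_subgroupOf (sup_le hH hK), subgroupOf_sup hH hK,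
    relIndex_sup_right]

theorem relIndex_dvd_relIndex_of_le_normalizer (hHL : H ≤ L) (hKL : K ≤ L)
    (hH : H ≤ normalizer (K : Set G)) : K.relIndex H ∣ K.relIndex L := by
  rw [← relIndex_sup_right_of_le_normalizer hH]
  exact Dvd.intro _ (relIndex_mul_relIndex _ _ _ le_sup_right (sup_le hHL hKL))

end Subgroup

open Subgroup in
theorem stmt_18_general {G : Type*} [Group G] (p : ℕ)
    (P : Sylow p G) (Q : Subgroup G) (hQ : Q ≤ P)
    (hC : ¬ p ∣ ((P : Subgroup G) ⊓ Subgroup.centralizer (Q : Set G)).relIndex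
        (Subgroup.centralizer (Q : Set G))) :
    IsPSelfCentralizing p (Q ⊔ ((P : Subgroup G) ⊓ Subgroup.centralizer (Q : Set G))) := by
  set R := (P : Subgroup G) ⊓ centralizer (Q : Set G)
  set C := centralizer ((Q ⊔ R : Subgroup G) : Set G)
  have hHP : Q ⊔ R ≤ P := sup_le hQ inf_le_left
  have hCQ : C ≤ centralizer (Q : Set G) := centralizer_le (SetLike.coe_subset_coe.2 le_sup_left)
  have hCR : C ≤ normalizer (R : Set G) :=
    (centralizer_le (SetLike.coe_subset_coe.2 le_sup_right)).trans (centralizer_le_normalizer _)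
  have hcenter : (Q ⊔ R) ⊓ C = R ⊓ C :=
    le_antisymm (le_inf (inf_le_inf hHP hCQ) inf_le_right) (inf_le_inf_right C le_sup_right)
  refine ⟨P.isPGroup'.to_le (inf_le_left.trans hHP), ?_⟩
  rw [hcenter, inf_relIndex_right]
  exact fun h ↦ hC (h.trans (relIndex_dvd_relIndex_of_le_normalizer hCQ inf_le_right hCR))

theorem stmt_18 {G : Type*} [Group G] [Fintype G] (p : ℕ) (hp : p.Prime)
    (P : Sylow p G) (Q : Subgroup G) (hQ : Q ≤ P)
    (hC : ¬ p ∣ ((P : Subgroup G) ⊓ Subgroup.centralizer (Q : Set G)).relIndex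
        (Subgroup.centralizer (Q : Set G))) :
    IsPSelfCentralizing p (Q ⊔ ((P : Subgroup G) ⊓ Subgroup.centralizer (Q : Set G))) :=
  stmt_18_general p P Q hQ hC
end
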